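/- River satisfies the Smith criterion: for every preference profile P and every tiebreaker τ for P, every River winner belongs to the Smith set, i.e., RV(P,τ) ⊆ Sm(P). -/

import Mathlib

/-! ## Preference profiles -/

/-- A preference profile: a finite set of voters, a finite set of alternatives,
and for each voter a (Boolean-valued) preference relation, `pref i x y` meaning
voter `i` ranks `x` above `y`. -/
structure Profile (ν α : Type) where
  voters : Finset ν
  alts : Finset α
  pref : ν → α → α → Bool

namespace Profile

variable {ν α : Type}

/-- A profile is valid if there is at least one voter, at least two alternatives,
and every voter's preference is a strict linear order on the alternatives. -/
def Valid (P : Profile ν α) : Prop :=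
  P.voters.Nonempty ∧ 2 ≤ P.alts.card ∧
  (∀ i ∈ P.voters, ∀ a ∈ P.alts, ¬ P.pref i a a) ∧
  (∀ i ∈ P.voters, ∀ a ∈ P.alts, ∀ b ∈ P.alts, ∀ c ∈ P.alts,
      P.pref i a b → P.pref i b c → P.pref i a c) ∧
  (∀ i ∈ P.voters, ∀ a ∈ P.alts, ∀ b ∈ P.alts, a ≠ b → (P.pref i a b ↔ ¬ P.pref i b a))

/-- The majority margin of `x` over `y`. -/
def margin (P : Profile ν α) (x y : α) : ℤ :=
  ((P.voters.filter (fun i => P.pref i x y)).card : ℤ) -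
    ((P.voters.filter (fun i => P.pref i y x)).card : ℤ)

/-- The restriction of a profile to the alternatives other than `x`. -/
def restrict [DecidableEq α] (P : Profile ν α) (x : α) : Profile ν α :=
  ⟨P.voters, P.alts.erase x, P.pref⟩

/-- `y` Pareto-dominates `x`: every voter ranks `y` above `x`,
i.e. the margin of `y` over `x` equals the number of voters. -/
def ParetoDominates (P : Profile ν α) (y x : α) : Prop :=
  P.margin y x = P.voters.card

/-- A profile is uniquely weighted if no margin between distinct alternatives is zero and
distinct ordered pairs of distinct alternatives have distinct margins. -/
def UniquelyWeighted (P : Profile ν α) : Prop :=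
  (∀ x ∈ P.alts, ∀ y ∈ P.alts, x ≠ y → P.margin x y ≠ 0) ∧
  (∀ x ∈ P.alts, ∀ y ∈ P.alts, ∀ v ∈ P.alts, ∀ w ∈ P.alts,
      x ≠ y → v ≠ w → (x, y) ≠ (v, w) → P.margin x y ≠ P.margin v w)

end Profile

/-! ## Lists, precedence, tiebreakers -/

/-- `e` precedes `f` in the list `L`. -/
def Precedes {β : Type} (L : List β) (e f : β) : Prop :=
  ∃ l₁ l₂ l₃ : List β, L = l₁ ++ e :: (l₂ ++ f :: l₃)

/-- A tiebreaker for a profile `P`: a linear order (list) of all ordered pairs of distinct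
alternatives with nonnegative margin, in which pairs with strictly larger margin come first. -/
def IsTiebreaker {ν α : Type} (P : Profile ν α) (L : List (α × α)) : Prop :=
  L.Nodup ∧
  (∀ e : α × α, e ∈ L ↔ e.1 ∈ P.alts ∧ e.2 ∈ P.alts ∧ e.1 ≠ e.2 ∧ 0 ≤ P.margin e.1 e.2) ∧
  L.Pairwise (fun e f => P.margin f.1 f.2 ≤ P.margin e.1 e.2)

/-! ## The River method -/

open Classical in
/-- The River diagram: process the edges in the order given by `L`, adding an edge unless
it would create a directed cycle or a second incoming edge at its target. -/
noncomputable def riverDiagram {α : Type} (L : List (α × α)) : Finset (α × α) :=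
  L.foldl (fun E e =>
    if (∃ f ∈ E, f.2 = e.2) ∨ Relation.ReflTransGen (fun a b => (a, b) ∈ E) e.2 e.1
    then E else insert e E) ∅

open Classical in
/-- The River winners: the sources (vertices with no incoming edge) of the River diagram. -/
noncomputable def riverWinners {ν α : Type} (P : Profile ν α) (L : List (α × α)) : Finset α :=
  P.alts.filter (fun x => ∀ f ∈ riverDiagram L, f.2 ≠ x)

/-! ## Split Cycle -/

/-- The (cyclically) consecutive edges of a cycle given by a list of distinct vertices. -/
def cycleEdges {α : Type} (c : List α) : List (α × α) := c.zip (c.rotate 1)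

/-- A majority cycle: a cycle of distinct alternatives all of whose edges have positive margin. -/
def IsMajorityCycle {ν α : Type} (P : Profile ν α) (c : List α) : Prop :=
  c.Nodup ∧ (∀ a ∈ c, a ∈ P.alts) ∧ ∀ e ∈ cycleEdges c, 0 < P.margin e.1 e.2

/-- `e` is a splitting edge of some majority cycle: it attains the minimum margin on the cycle. -/
def IsSplittingEdge {ν α : Type} (P : Profile ν α) (e : α × α) : Prop :=
  ∃ c : List α, IsMajorityCycle P c ∧ e ∈ cycleEdges c ∧
    ∀ f ∈ cycleEdges c, P.margin e.1 e.2 ≤ P.margin f.1 f.2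

open Classical in
/-- The Split Cycle winners: alternatives with no incoming edge in the Split Cycle diagram,
whose edges are the positive-margin pairs that are not splitting edges of any majority cycle. -/
noncomputable def splitCycleWinners {ν α : Type} (P : Profile ν α) : Finset α :=
  P.alts.filter (fun x => ¬ ∃ y ∈ P.alts, 0 < P.margin y x ∧ ¬ IsSplittingEdge P (y, x))

/-! ## Ranked Pairs -/

/-- A processing order for Ranked Pairs: all pairs with positive margin,
ordered by decreasing margin. -/
def IsRPOrder {ν α : Type} (P : Profile ν α) (L : List (α × α)) : Prop :=
  L.Nodup ∧
  (∀ e : α × α, e ∈ L ↔ e.1 ∈ P.alts ∧ e.2 ∈ P.alts ∧ 0 < P.margin e.1 e.2) ∧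
  L.Pairwise (fun e f => P.margin f.1 f.2 ≤ P.margin e.1 e.2)

open Classical in
/-- The Ranked Pairs diagram: add each edge in order unless it would create a directed cycle. -/
noncomputable def rpDiagram {α : Type} (L : List (α × α)) : Finset (α × α) :=
  L.foldl (fun E e =>
    if Relation.ReflTransGen (fun a b => (a, b) ∈ E) e.2 e.1 then E else insert e E) ∅

open Classical in
/-- The Ranked Pairs winners: sources of the Ranked Pairs diagram. -/
noncomputable def rpWinners {ν α : Type} (P : Profile ν α) (L : List (α × α)) : Finset α :=
  P.alts.filter (fun x => ∀ f ∈ rpDiagram L, f.2 ≠ x)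

/-! ## Beat Path -/

/-- A majority path: a sequence of distinct alternatives with positive margins along it. -/
def IsMajorityPath {ν α : Type} (P : Profile ν α) (p : List α) : Prop :=
  p.Nodup ∧ (∀ a ∈ p, a ∈ P.alts) ∧ p.Chain' (fun a b => 0 < P.margin a b)

/-- `s_P(x,y)`: the maximum strength (minimum margin along the path) of a majority path
from `x` to `y`, and `0` if there is no such path. -/
noncomputable def beatPathStrength {ν α : Type} (P : Profile ν α) (x y : α) : ℤ :=
  sSup ({0} ∪ {s : ℤ | ∃ p : List α, IsMajorityPath P p ∧ p.head? = some x ∧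
    p.getLast? = some y ∧ ((p.zip p.tail).map (fun e => P.margin e.1 e.2)).min? = some s})

open Classical in
/-- The Beat Path winners. -/
noncomputable def beatPathWinners {ν α : Type} (P : Profile ν α) : Finset α :=
  P.alts.filter (fun x => ∀ y ∈ P.alts, y ≠ x →
    beatPathStrength P y x ≤ beatPathStrength P x y)

/-! ## Stable Voting -/

/-- Auxiliary, fuel-based definition of Stable Voting (for uniquely weighted profiles).
If only one alternative remains it wins; otherwise the winner is the alternative `x` of the
first pair `(x,y)` (ordered by decreasing margin) with `m(x,y) > 0` and `x` a Split Cycle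
winner, such that `x` is a Stable Voting winner of the profile without `y`. -/
noncomputable def svAux {ν α : Type} [DecidableEq α] : ℕ → Profile ν α → Set α
  | 0, P => ↑P.alts
  | (n+1), P =>
      if P.alts.card ≤ 1 then ↑P.alts
      else {x | x ∈ P.alts ∧ ∃ y ∈ P.alts, 0 < P.margin x y ∧ x ∈ splitCycleWinners P ∧
        x ∈ svAux n (P.restrict y) ∧
        ∀ x' ∈ P.alts, ∀ y' ∈ P.alts, 0 < P.margin x' y' → x' ∈ splitCycleWinners P →
          P.margin x y < P.margin x' y' → x' ∉ svAux n (P.restrict y')}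

/-- The Stable Voting winners (for uniquely weighted profiles). -/
noncomputable def svWinners {ν α : Type} [DecidableEq α] (P : Profile ν α) : Set α :=
  svAux P.alts.card P

/-! ## Smith set, covering, quasi-Pareto domination -/

/-- A dominant set of alternatives: nonempty, and each member defeats every non-member. -/
def IsDominant {ν α : Type} (P : Profile ν α) (X : Finset α) : Prop :=
  X.Nonempty ∧ X ⊆ P.alts ∧ ∀ x ∈ X, ∀ y ∈ P.alts, y ∉ X → 0 < P.margin x y

/-- The Smith set: the inclusion-minimal dominant set. -/
def IsSmithSet {ν α : Type} (P : Profile ν α) (S : Finset α) : Prop :=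
  IsDominant P S ∧ ∀ X : Finset α, IsDominant P X → S ⊆ X

/-- `y` covers `x`: `y` defeats `x` and does at least as well against every third alternative. -/
def Covers {ν α : Type} (P : Profile ν α) (y x : α) : Prop :=
  0 < P.margin y x ∧ ∀ z ∈ P.alts, z ≠ x → z ≠ y → P.margin x z ≤ P.margin y z

/-- `y` quasi-Pareto-dominates `x`. -/
def QuasiParetoDominates {ν α : Type} (P : Profile ν α) (y x : α) : Prop :=
  Covers P y x ∧ ∀ z ∈ P.alts, z ≠ x → z ≠ y →
    P.margin z x ≤ P.margin y x ∧ P.margin x z ≤ P.margin y x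

/-! ## Tiebreaker functions -/

/-- A consistent tiebreaker function: it assigns a tiebreaker to every profile, and the relative
order of two edges not involving `x` is unchanged when `x` is removed from the profile. -/
def IsConsistentTBF {ν α : Type} [DecidableEq α] (T : Profile ν α → List (α × α)) : Prop :=
  (∀ P : Profile ν α, IsTiebreaker P (T P)) ∧
  ∀ (P : Profile ν α) (x a b c d : α), x ∈ P.alts →
    x ≠ a → x ≠ b → x ≠ c → x ≠ d →
    (a, b) ∈ T P → (c, d) ∈ T P →
    (Precedes (T P) (a, b) (c, d) ↔ Precedes (T (P.restrict x)) (a, b) (c, d))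

/-- A Pareto-consistent tiebreaker function: consistent, and whenever `y` Pareto-dominates `x`,
the edge `(y,z)` precedes the edge `(x,z)` for every third alternative `z`. -/
def IsParetoConsistentTBF {ν α : Type} [DecidableEq α]
    (T : Profile ν α → List (α × α)) : Prop :=
  IsConsistentTBF T ∧
  ∀ (P : Profile ν α) (x y z : α), P.ParetoDominates y x →
    z ≠ x → z ≠ y → (y, z) ∈ T P → (x, z) ∈ T P → Precedes (T P) (y, z) (x, z)

/-- A quasi-Pareto-consistent tiebreaker function. -/
def IsQuasiParetoConsistentTBF {ν α : Type} [DecidableEq α]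
    (T : Profile ν α → List (α × α)) : Prop :=
  IsParetoConsistentTBF T ∧
  (∀ (P : Profile ν α) (x y y' : α),
      P.margin y x = P.margin y' x → QuasiParetoDominates P y x →
      ¬ QuasiParetoDominates P y' x →
      (y, x) ∈ T P → (y', x) ∈ T P → Precedes (T P) (y, x) (y', x)) ∧
  (∀ (P : Profile ν α) (x y z : α), QuasiParetoDominates P y x →
      ((x, z) ∈ T P → (y, z) ∈ T P → Precedes (T P) (y, z) (x, z)) ∧
      ((x, z) ∈ T P → (y, x) ∈ T P → Precedes (T P) (y, x) (x, z)))

/-- A tiebreaker for `P` induced by the fixed tie-breaking order `r` on pairs: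
edges are ordered by decreasing margin, ties in margin broken according to `r`. -/
def IsTiebreakerVia {ν α : Type} (r : α × α → α × α → Prop) (P : Profile ν α)
    (L : List (α × α)) : Prop :=
  IsTiebreaker P L ∧ ∀ e f : α × α, Precedes L e f →
    P.margin f.1 f.2 < P.margin e.1 e.2 ∨ (P.margin e.1 e.2 = P.margin f.1 f.2 ∧ r e f)

/-!
Let `x ∉ X` be a River winner and `s ∈ X` for a dominant set `X`. The pair `(s, x)` has
positive margin, so it is processed by River. Since `x` ends up with no incoming edge, `(s, x)`
was rejected because the diagram already contained a path from `x` to `s`. But every diagram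
edge has nonnegative margin, while every edge from outside `X` into `X` has negative margin,
so no diagram path starting outside `X` can reach `s`.
-/

namespace River

variable {α : Type}

open Classical

abbrev Rejects (E : Finset (α × α)) (e : α × α) : Prop :=
  (∃ f ∈ E, f.2 = e.2) ∨ Relation.ReflTransGen (fun a b => (a, b) ∈ E) e.2 e.1

noncomputable def step (E : Finset (α × α)) (e : α × α) : Finset (α × α) :=
  if Rejects E e then E else insert e E

theorem riverDiagram_eq_foldl (L : List (α × α)) : riverDiagram L = L.foldl step ∅ := rfl

theorem Rejects.mono {E E' : Finset (α × α)} (h : E ⊆ E') {e : α × α} (he : Rejects E e) :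
    Rejects E' e := by
  rcases he with ⟨f, hf, hfe⟩ | hp
  · exact Or.inl ⟨f, h hf, hfe⟩
  · exact Or.inr (Relation.ReflTransGen.mono (fun _ _ hab => h hab) _ _ hp)

theorem subset_step (E : Finset (α × α)) (e : α × α) : E ⊆ step E e := by
  unfold step; split
  · exact subset_rfl
  · exact Finset.subset_insert _ _

theorem step_subset_insert (E : Finset (α × α)) (e : α × α) : step E e ⊆ insert e E := by
  unfold step; split
  · exact Finset.subset_insert _ _
  · exact subset_rfl

theorem subset_foldl_step (L : List (α × α)) (E : Finset (α × α)) : E ⊆ L.foldl step E := by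
  induction L generalizing E with
  | nil => exact subset_rfl
  | cons e L ih => exact (subset_step E e).trans (ih _)

theorem mem_of_mem_foldl_step {L : List (α × α)} {E : Finset (α × α)} {f : α × α}
    (hf : f ∈ L.foldl step E) : f ∈ E ∨ f ∈ L := by
  induction L generalizing E with
  | nil => exact Or.inl hf
  | cons e L ih =>
    rcases ih hf with h | h
    · rcases Finset.mem_insert.1 (step_subset_insert E e h) with rfl | h
      · exact Or.inr List.mem_cons_self
      · exact Or.inl h
    · exact Or.inr (List.mem_cons_of_mem e h)

/-- An accepted edge counts as rejected afterwards, being itself an incoming edge at its target. -/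
theorem rejects_foldl_step {L : List (α × α)} {e : α × α} (he : e ∈ L)
    (E : Finset (α × α)) : Rejects (L.foldl step E) e := by
  induction L generalizing E with
  | nil => cases he
  | cons f L ih =>
    rcases List.mem_cons.1 he with rfl | he
    · have hsub := subset_foldl_step L (step E e)
      by_cases hE : Rejects E e
      · exact hE.mono ((subset_step E e).trans hsub)
      · have he_mem : e ∈ step E e := by
          simp only [step, if_neg hE, Finset.mem_insert_self]
        exact Or.inl ⟨e, hsub he_mem, rfl⟩
    · exact ih he _

end River

open River

theorem mem_of_mem_riverDiagram {α : Type} {L : List (α × α)} {e : α × α}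
    (he : e ∈ riverDiagram L) : e ∈ L := by
  rw [riverDiagram_eq_foldl] at he
  exact (mem_of_mem_foldl_step he).resolve_left (Finset.notMem_empty e)

theorem rejects_riverDiagram {α : Type} {L : List (α × α)} {e : α × α} (he : e ∈ L) :
    Rejects (riverDiagram L) e := by
  rw [riverDiagram_eq_foldl]
  exact rejects_foldl_step he ∅

theorem Profile.margin_swap {ν α : Type} (P : Profile ν α) (x y : α) :
    P.margin y x = -P.margin x y := by
  simp only [Profile.margin, neg_sub]

theorem IsDominant.notMem_of_reflTransGen_riverDiagram {ν α : Type} {P : Profile ν α}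
    {L : List (α × α)} (hL : IsTiebreaker P L) {X : Finset α} (hX : IsDominant P X)
    {x y : α} (hxy : Relation.ReflTransGen (fun a b => (a, b) ∈ riverDiagram L) x y)
    (hx : x ∉ X) : y ∉ X := by
  induction hxy with
  | refl => exact hx
  | @tail a b _ hab ha =>
    intro hb
    obtain ⟨ha_alt, -, -, hab_nonneg⟩ := (hL.2.1 (a, b)).1 (mem_of_mem_riverDiagram hab)
    have hba : 0 < P.margin b a := hX.2.2 b hb a ha_alt ha
    rw [P.margin_swap] at hba
    exact absurd hab_nonneg (by simpa using hba)

theorem riverWinners_subset_of_isDominant {ν α : Type} {P : Profile ν α} {L : List (α × α)}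
    (hL : IsTiebreaker P L) {X : Finset α} (hX : IsDominant P X) :
    riverWinners P L ⊆ X := by
  classical
  intro x hx
  by_contra hxX
  obtain ⟨hx_alt, hx_source⟩ := Finset.mem_filter.1 hx
  obtain ⟨s, hs⟩ := hX.1
  have hsx : (s, x) ∈ L := (hL.2.1 _).2
    ⟨hX.2.1 hs, hx_alt, fun h => hxX ((show s = x from h) ▸ hs), (hX.2.2 s hs x hx_alt hxX).le⟩
  rcases rejects_riverDiagram hsx with ⟨f, hf, hfx⟩ | hpath
  · exact hx_source f hf hfx
  · exact hX.notMem_of_reflTransGen_riverDiagram hL hpath hxX hs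

theorem river_smith_criterion_general {ν α : Type} (P : Profile ν α)
    (L : List (α × α)) (hL : IsTiebreaker P L)
    (S : Finset α) (hS : IsSmithSet P S) :
    riverWinners P L ⊆ S :=
  riverWinners_subset_of_isDominant hL hS.1

theorem river_smith_criterion {ν α : Type} (P : Profile ν α) (hP : P.Valid)
    (L : List (α × α)) (hL : IsTiebreaker P L)
    (S : Finset α) (hS : IsSmithSet P S) :
    riverWinners P L ⊆ S :=
  river_smith_criterion_general P L hL S hS
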